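/- arXiv:2511.05249 — 8 statements merged into one kernel-verified Lean document; each statement's English description precedes it below -/
import Mathlib

section
/- Let G be a group, H a normal subgroup, and A a G-module. The inflation map H¹(G/H, A^H) → H¹(G,A) is injective. -/
/-- Injectivity of the inflation map `H¹(G/H, A^H) → H¹(G,A)`, stated at the level of
derivations: if a derivation `f : G → A` is constant on `H`-cosets with values in `A^H`
(i.e. `f` is an inflated 1-cocycle of `G/H` with coefficients in `A^H`), and `f` is an
inner derivation of `G` with coefficients in `A`, then it is inner with a value in `A^H`. -/
theorem inflation_injective {G A : Type*} [Group G] [AddCommGroup A] [DistribMulAction G A]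
    (H : Subgroup G) [H.Normal]
    (f : G → A) (hf : ∀ x y : G, f (x * y) = x • f y + f x)
    (hconst : ∀ g : G, ∀ h ∈ H, f (g * h) = f g)
    (hfix : ∀ g : G, ∀ h ∈ H, h • f g = f g)
    (hinner : ∃ a : A, ∀ g : G, f g = g • a - a) :
    ∃ a : A, (∀ h ∈ H, h • a = a) ∧ ∀ g : G, f g = g • a - a := by
  obtain ⟨a, ha⟩ := hinner
  have h1 : f 1 = 0 := by have := hf 1 1; simpa using this
  refine ⟨a, fun h hh => ?_, ha⟩
  have : f h = 0 := by simpa [h1] using hconst 1 h hh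
  have := (ha h).symm.trans this
  exact sub_eq_zero.mp this
end

section
/- Let G be a group, H a normal subgroup, and A a G-module. The sequence 0 → H¹(G/H, A^H) → H¹(G,A) → H¹(H,A), where the first map is inflation and the second is restriction, is exact. -/
/-- Exactness of `0 → H¹(G/H, A^H) → H¹(G,A) → H¹(H,A)` (inflation then restriction),
stated at the level of derivations.  The first conjunct is injectivity of inflation, the
second says that the class of a derivation `f : G → A` restricts to the trivial class on
`H` if and only if `f` is cohomologous to an inflated derivation (one that is constant on
`H`-cosets with values in `A^H`). -/
theorem inflation_restriction_exact {G A : Type*} [Group G] [AddCommGroup A]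
    [DistribMulAction G A] (H : Subgroup G) [H.Normal] :
    (∀ f : G → A, (∀ x y : G, f (x * y) = x • f y + f x) →
      (∀ g : G, ∀ h ∈ H, f (g * h) = f g) →
      (∀ g : G, ∀ h ∈ H, h • f g = f g) →
      (∃ a : A, ∀ g : G, f g = g • a - a) →
      ∃ a : A, (∀ h ∈ H, h • a = a) ∧ ∀ g : G, f g = g • a - a) ∧
    (∀ f : G → A, (∀ x y : G, f (x * y) = x • f y + f x) →
      ((∃ a : A, ∀ h ∈ H, f h = h • a - a) ↔
        ∃ f' : G → A, (∀ x y : G, f' (x * y) = x • f' y + f' x) ∧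
          (∀ g : G, ∀ h ∈ H, f' (g * h) = f' g) ∧
          (∀ g : G, ∀ h ∈ H, h • f' g = f' g) ∧
          ∃ a : A, ∀ g : G, f g = f' g + (g • a - a))) := by
  constructor
  · rintro f hf hconst _hfix ⟨a, ha⟩
    refine ⟨a, ?_, ha⟩
    intro h hh
    have h1 : f 1 = 0 := by have := hf 1 1; simpa using this
    have h0 : f h = 0 := by simpa [h1] using hconst 1 h hh
    have := ha h
    rw [h0] at this
    have := this.symm
    rwa [sub_eq_zero] at this
  · intro f hf
    have h1 : f 1 = 0 := by have := hf 1 1; simpa using this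
    constructor
    · rintro ⟨a, ha⟩
      set f' : G → A := fun g => f g - (g • a - a) with hf'def
      have hd' : ∀ x y : G, f' (x * y) = x • f' y + f' x := by
        intro x y
        simp only [hf'def, hf, mul_smul, smul_sub]
        abel
      have hz : ∀ h ∈ H, f' h = 0 := by
        intro h hh
        simp [hf'def, ha h hh]
      have hc' : ∀ g : G, ∀ h ∈ H, f' (g * h) = f' g := by
        intro g h hh
        rw [hd' g h, hz h hh, smul_zero, zero_add]
      refine ⟨f', hd', hc', ?_, a, by intro g; simp [hf'def]⟩
      intro g h hh
      have hh' : g⁻¹ * h * g ∈ H := by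
        have := Subgroup.Normal.conj_mem ‹H.Normal› h hh g⁻¹
        simpa using this
      have e1 : f' (g * (g⁻¹ * h * g)) = f' g := hc' g _ hh'
      have e2 : g * (g⁻¹ * h * g) = h * g := by group
      have e3 : f' (h * g) = h • f' g + f' h := hd' h g
      rw [e2, e3, hz h hh, add_zero] at e1
      exact e1
    · rintro ⟨f', hd', hc', _hfix', a, ha⟩
      refine ⟨a, ?_⟩
      intro h hh
      have h1' : f' 1 = 0 := by have := hd' 1 1; simpa using this
      have h0' : f' h = 0 := by simpa [h1'] using hc' 1 h hh
      rw [ha h, h0', zero_add]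
end

section
/- Let G be a finite abelian group acting faithfully and irreducibly on a finite abelian group A (i.e., A is a simple module over the subring of End(A) generated by the image of G). If A^G = 0 and f : G → A is a derivation, then f is inner: there exists a ∈ A with f(x) = x·a − a for all x ∈ G. Hence H¹(G,A) = 0. -/
/-- A finite abelian group `G` acting faithfully and irreducibly (no nontrivial proper
`G`-invariant subgroup) on a finite abelian group `A` with `A^G = 0`: every derivation
`f : G → A` is inner, hence `H¹(G,A) = 0`. -/
theorem h1_vanishes_finite_abelian_irreducible {G A : Type*} [CommGroup G] [Finite G]
    [AddCommGroup A] [Finite A] [Nontrivial A] [DistribMulAction G A]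
    (hfaith : ∀ g : G, (∀ a : A, g • a = a) → g = 1)
    (hirr : ∀ B : AddSubgroup A, (∀ g : G, ∀ a ∈ B, g • a ∈ B) → B = ⊥ ∨ B = ⊤)
    (hAG : ∀ a : A, (∀ g : G, g • a = a) → a = 0)
    (f : G → A) (hf : ∀ x y : G, f (x * y) = x • f y + f x) :
    ∃ a : A, ∀ x : G, f x = x • a - a := by
  have hcomm : ∀ (g h : G) (a : A), g • h • a = h • g • a := by
    intro g h a
    rw [← mul_smul, mul_comm, mul_smul]
  -- find y acting nontrivially
  obtain ⟨y, b, hyb⟩ : ∃ y : G, ∃ b : A, y • b ≠ b := by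
    by_contra h
    push_neg at h
    obtain ⟨a, ha⟩ := exists_ne (0 : A)
    exact ha (hAG a (fun g => h g a))
  set φ : A →+ A :=
    { toFun := fun a => y • a - a
      map_zero' := by simp
      map_add' := by intro a b; simp only [smul_add]; abel }
  have hφ : ∀ a : A, φ a = y • a - a := fun _ => rfl
  have hφinj : Function.Injective φ := by
    rw [← AddMonoidHom.ker_eq_bot_iff]
    rcases hirr φ.ker (by
      intro g a ha
      rw [AddMonoidHom.mem_ker] at ha ⊢
      rw [hφ] at ha ⊢
      rw [hcomm]
      have : y • a = a := by
        have := sub_eq_zero.mp ha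
        exact this
      rw [this, sub_self]) with h | h
    · exact h
    · exfalso
      apply hyb
      have hb : b ∈ φ.ker := h ▸ AddSubgroup.mem_top b
      rw [AddMonoidHom.mem_ker, hφ, sub_eq_zero] at hb
      exact hb
  have hφsurj : Function.Surjective φ := by
    rw [← AddMonoidHom.range_eq_top]
    rcases hirr φ.range (by
      rintro g a ⟨c, rfl⟩
      exact ⟨g • c, by rw [hφ, hφ, smul_sub, hcomm]⟩) with h | h
    · exfalso
      apply hyb
      have : φ b ∈ φ.range := ⟨b, rfl⟩
      rw [h, AddSubgroup.mem_bot, hφ, sub_eq_zero] at this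
      exact this
    · exact h
  obtain ⟨a, ha⟩ := hφsurj (f y)
  refine ⟨a, fun x => ?_⟩
  -- key identity from commutativity
  have key : x • f y - f y = y • f x - f x := by
    have h1 := hf x y
    have h2 := hf y x
    rw [mul_comm] at h2
    rw [h1] at h2
    -- h2 : x • f y + f x = y • f x + f y
    exact sub_eq_sub_iff_add_eq_add.mpr h2
  apply hφinj
  rw [hφ, hφ]
  rw [hφ] at ha
  calc y • f x - f x = x • f y - f y := key.symm
    _ = x • (y • a - a) - (y • a - a) := by rw [ha]
    _ = y • (x • a - a) - (x • a - a) := by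
        rw [smul_sub, smul_sub, hcomm]
        abel
end

section
/- Let G be a finite abelian group and A a finite G-module with A^G = 0. Then H¹(G,A) = 0. -/
/-!
Let `R` be the subring of `End A` generated by `G`; it is commutative and finite. For a
derivation `f`, commutativity of `G` gives `(g - 1) f(x) = (x - 1) f(g)`, so `(g - 1) ∘ f` is
inner. The `r ∈ R` with `r ∘ f` inner form an ideal, which therefore contains every `g - 1`. If it
were proper it would lie in a maximal ideal `m`; in the Artinian ring `R`, `m` is a minimal prime,
hence an associated prime of the faithful module `A`, i.e. `m = ann a` for some `a ≠ 0`, and then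
`a ∈ A^G`. So the ideal contains `1`, i.e. `f` is inner.
-/

theorem Ideal.span_eq_top_of_torsionBySet_eq_bot {R M : Type*} [CommRing R] [IsArtinianRing R]
    [AddCommGroup M] [Module R M] [Module.Finite R M] [FaithfulSMul R M] {s : Set R}
    (hs : Submodule.torsionBySet R M s = ⊥) : Ideal.span s = ⊤ := by
  by_contra hne
  obtain ⟨p, hp, hsp⟩ := Ideal.exists_le_maximal _ hne
  have hp_ass : p ∈ associatedPrimes R M :=
    Module.associatedPrimes.minimalPrimes_annihilator_subset_associatedPrimes R M <|
      IsArtinianRing.mem_minimalPrimes (Module.annihilator_eq_bot.2 ‹_› ▸ bot_le)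
  obtain ⟨-, x, rfl⟩ := isAssociatedPrime_iff.1 hp_ass
  have hx : x ∈ Submodule.torsionBySet R M s := by
    rw [Submodule.mem_torsionBySet_iff]
    rintro ⟨r, hr⟩
    simpa [Submodule.mem_colon_singleton] using hsp (Ideal.subset_span hr)
  rw [hs, Submodule.mem_bot] at hx
  subst hx
  exact hp.ne_top (by ext; simp [Submodule.mem_colon_singleton])

section CoboundaryIdeal

variable {G R A : Type*} [CommRing R] [AddCommGroup A] [Module R A]

def coboundaryIdeal (ρ : G → R) (f : G → A) : Ideal R where
  carrier := {r | ∃ a : A, ∀ x, r • f x = (ρ x - 1) • a}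
  zero_mem' := ⟨0, by simp⟩
  add_mem' := by
    rintro r s ⟨a, ha⟩ ⟨b, hb⟩
    exact ⟨a + b, fun x => by rw [add_smul, ha, hb, smul_add]⟩
  smul_mem' := by
    rintro c r ⟨a, ha⟩
    exact ⟨c • a, fun x => by rw [smul_eq_mul, mul_smul, ha, smul_comm]⟩

variable [CommMagma G] {ρ : G → R} {f : G → A}

theorem sub_one_mem_coboundaryIdeal (hf : ∀ x y, f (x * y) = ρ x • f y + f x) (g : G) :
    ρ g - 1 ∈ coboundaryIdeal ρ f := by
  refine ⟨f g, fun x => ?_⟩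
  have hswap := hf g x
  rw [mul_comm, hf x g] at hswap
  rw [sub_smul, sub_smul, one_smul, one_smul, sub_eq_sub_iff_add_eq_add, hswap]

theorem exists_eq_sub_one_smul_of_fixed_eq_zero [IsArtinianRing R] [Module.Finite R A]
    [FaithfulSMul R A] (hfix : ∀ a : A, (∀ g, ρ g • a = a) → a = 0)
    (hf : ∀ x y, f (x * y) = ρ x • f y + f x) : ∃ a : A, ∀ x, f x = (ρ x - 1) • a := by
  have htors : Submodule.torsionBySet R A (Set.range fun g => ρ g - 1) = ⊥ := by
    refine eq_bot_iff.2 fun a ha => hfix a fun g => ?_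
    have hg := (Submodule.mem_torsionBySet_iff _ a).1 ha ⟨_, g, rfl⟩
    rwa [sub_smul, one_smul, sub_eq_zero] at hg
  have hspan : Ideal.span _ ≤ coboundaryIdeal ρ f :=
    Ideal.span_le.2 <| Set.range_subset_iff.2 (sub_one_mem_coboundaryIdeal hf)
  obtain ⟨a, ha⟩ : (1 : R) ∈ coboundaryIdeal ρ f :=
    hspan (Ideal.span_eq_top_of_torsionBySet_eq_bot htors ▸ Submodule.mem_top)
  exact ⟨a, fun x => by simpa using ha x⟩

end CoboundaryIdeal

section ActionRing

open scoped IsMulCommutative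

variable (G A : Type*) [CommMonoid G] [AddCommGroup A] [DistribMulAction G A]

abbrev actionRing : Subring (Module.End ℤ A) :=
  Subring.closure (Set.range (DistribMulAction.toModuleEnd ℤ A (S := G)))

instance : IsMulCommutative (actionRing G A) :=
  Subring.isMulCommutative_closure <| by
    rintro _ ⟨x, rfl⟩ _ ⟨y, rfl⟩
    rw [← map_mul, mul_comm, map_mul]

instance : CommRing (actionRing G A) := inferInstance

instance [Finite A] : IsArtinianRing (actionRing G A) :=
  have : Finite (Module.End ℤ A) := Finite.of_injective _ LinearMap.coe_injective
  isArtinian_of_finite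

variable {G A}

def actionRing.of (g : G) : actionRing G A :=
  ⟨DistribMulAction.toModuleEnd ℤ A g, Subring.subset_closure ⟨g, rfl⟩⟩

theorem actionRing.of_smul (g : G) (a : A) : (actionRing.of g : actionRing G A) • a = g • a := rfl

end ActionRing

theorem h1_vanishes_finite_abelian_general {G A : Type*} [CommGroup G]
    [AddCommGroup A] [Finite A] [DistribMulAction G A]
    (hAG : ∀ a : A, (∀ g : G, g • a = a) → a = 0)
    (f : G → A) (hf : ∀ x y : G, f (x * y) = x • f y + f x) :
    ∃ a : A, ∀ x : G, f x = x • a - a := by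
  obtain ⟨a, ha⟩ := exists_eq_sub_one_smul_of_fixed_eq_zero (ρ := (actionRing.of : G → actionRing G A)) (f := f)
    (by simpa only [actionRing.of_smul] using hAG) (by simpa only [actionRing.of_smul] using hf)
  exact ⟨a, fun x => by rw [ha, sub_smul, one_smul, actionRing.of_smul]⟩

/-- For a finite abelian group `G` and a finite `G`-module `A` with `A^G = 0`,
`H¹(G,A) = 0`: every derivation is inner. -/
theorem h1_vanishes_finite_abelian {G A : Type*} [CommGroup G] [Finite G]
    [AddCommGroup A] [Finite A] [DistribMulAction G A]
    (hAG : ∀ a : A, (∀ g : G, g • a = a) → a = 0)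
    (f : G → A) (hf : ∀ x y : G, f (x * y) = x • f y + f x) :
    ∃ a : A, ∀ x : G, f x = x • a - a :=
  h1_vanishes_finite_abelian_general hAG f hf
end

section
/- Let G be a finite nilpotent group and A a finite G-module with A^G = 0. Then H¹(G,A) = 0. -/
/-!
Induction on the nilpotency class through `G ⧸ Z(G)`, and for fixed `G` on `|A|`. For central `z`
a cocycle satisfies `(z - 1) f(g) = (g - 1) f(z)`. If `Z(G)` acts trivially on `A`, this puts
`f(z)` in `A^G = 0`, so `f` is inflated from a cocycle of `G ⧸ Z(G)`. Otherwise some central `z`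
gives a nonzero `G`-endomorphism `φ = z - 1`. If `φ` is injective it is invertible, and `f` is the
coboundary of `φ⁻¹ f(z)`. If not, `0 → ker φ → A → im φ → 0` has proper, fixed-point-free end
terms, and `H¹` of the middle term vanishes with that of the ends.
-/

universe u v

open Function Subgroup

abbrev AddSubgroup.distribMulActionOfStable {G A : Type*} [Monoid G] [AddCommGroup A]
    [DistribMulAction G A] (S : AddSubgroup A) (hS : ∀ (g : G), ∀ a ∈ S, g • a ∈ S) :
    DistribMulAction G S :=
  letI : SMul G S := ⟨fun g a => ⟨g • (a : A), hS g a a.2⟩⟩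
  Subtype.coe_injective.distribMulAction S.subtype fun _ _ => rfl

namespace groupCohomology

def H1Vanishes (G A : Type*) [Mul G] [AddCommGroup A] [SMul G A] : Prop :=
  ∀ f : G → A, IsCocycle₁ f → IsCoboundary₁ f

section Monoid

variable {G A : Type*} [Monoid G] [AddCommGroup A]

theorem IsCocycle₁.smul_sub_self_eq_of_commute [MulAction G A] {f : G → A} (hf : IsCocycle₁ f)
    {g z : G} (h : Commute g z) : z • f g - f g = g • f z - f z := by
  rw [sub_eq_sub_iff_add_eq_add, ← hf, ← hf, h.eq]

theorem IsCocycle₁.apply_eq_zero_of_smul_eq_self [MulAction G A]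
    (hA : ∀ a : A, (∀ g : G, g • a = a) → a = 0) {f : G → A} (hf : IsCocycle₁ f) {z : G}
    (hz : ∀ g, Commute g z) (hzA : ∀ a : A, z • a = a) : f z = 0 :=
  hA _ fun g => sub_eq_zero.mp <| by rw [← hf.smul_sub_self_eq_of_commute (hz g), hzA, sub_self]

variable [DistribMulAction G A]

theorem IsCocycle₁.isCoboundary₁_of_bijective {f : G → A} (hf : IsCocycle₁ f) {z : G}
    (hz : ∀ g, Commute g z) (hbij : Bijective fun a : A => z • a - a) : IsCoboundary₁ f := by
  obtain ⟨a, ha⟩ := hbij.surjective (f z)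
  refine ⟨a, fun g => hbij.injective ?_⟩
  dsimp only at ha ⊢
  rw [hf.smul_sub_self_eq_of_commute (hz g), ← ha, smul_sub, smul_sub, smul_smul,
    smul_smul, (hz g).eq]
  abel

theorem H1Vanishes.of_exact {K C : Type*} [AddCommGroup K] [AddCommGroup C]
    [DistribMulAction G K] [DistribMulAction G C] (ι : K →+[G] A) (π : A →+[G] C)
    (hι : Injective ι) (hπ : Surjective π) (hexact : Exact ι π)
    (hK : H1Vanishes G K) (hC : H1Vanishes G C) : H1Vanishes G A := by
  intro f hf
  obtain ⟨c, hc⟩ := hC (π ∘ f) fun x y => by simp [hf x y]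
  obtain ⟨a, rfl⟩ := hπ c
  choose k hk using fun g => (hexact (f g - (g • a - a))).mp <| by
    rw [map_sub, map_sub, map_smul, ← comp_apply (f := π), ← hc g, sub_self]
  obtain ⟨b, hb⟩ := hK k fun x y => hι <| by
    simp only [map_add, map_smul, hk, hf x y, mul_smul, smul_sub]; abel
  refine ⟨a + ι b, fun g => ?_⟩
  have := congrArg ι (hb g)
  rw [map_sub, map_smul, hk, eq_sub_iff_add_eq] at this
  rw [← this, smul_add]
  abel

end Monoid

theorem IsCocycle₁.isCoboundary₁_of_surjective {G Q A : Type*} [Group G] [Monoid Q]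
    [AddCommGroup A] [DistribMulAction G A] [MulAction Q A] (π : G →* Q) (hπ : Surjective π)
    (hπA : ∀ (g : G) (a : A), π g • a = g • a) {f : G → A} (hf : IsCocycle₁ f)
    (hker : ∀ g, π g = 1 → f g = 0) (hQ : H1Vanishes Q A) : IsCoboundary₁ f := by
  have hfib : ∀ g g', π g = π g' → f g = f g' := fun g g' h => by
    have : f (g'⁻¹ * g) = 0 := hker _ (by rw [map_mul, h, ← map_mul, inv_mul_cancel, map_one])
    rw [← mul_inv_cancel_left g' g, hf, this, smul_zero, zero_add]
  set s := surjInv hπ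
  have hs : ∀ q, π (s q) = q := surjInv_eq hπ
  obtain ⟨a, ha⟩ := hQ (f ∘ s) fun q r => by
    simp only [comp_apply]
    rw [hfib (s (q * r)) (s q * s r) (by simp [hs]), hf, ← hπA, hs]
  exact ⟨a, fun g => by rw [← hπA, ha, comp_apply, hfib _ _ (hs _)]⟩

theorem h1Vanishes_of_forall_card_lt {G : Type*} [Monoid G] {A : Type v} [AddCommGroup A]
    [Finite A] [DistribMulAction G A] (hA : ∀ a : A, (∀ g : G, g • a = a) → a = 0)
    (hlt : ∀ (B : Type v) [AddCommGroup B] [Finite B] [DistribMulAction G B],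
      Nat.card B < Nat.card A → (∀ b : B, (∀ g : G, g • b = b) → b = 0) → H1Vanishes G B)
    (φ : A →+ A) (hφ : ∀ (g : G) (a : A), φ (g • a) = g • φ a) (hφ₀ : φ ≠ 0)
    (hinj : ¬ Injective φ) : H1Vanishes G A := by
  have hsub (S : AddSubgroup A) (hS : ∀ (g : G), ∀ a ∈ S, g • a ∈ S) (hS_top : S ≠ ⊤) :
      letI := S.distribMulActionOfStable hS; H1Vanishes G S :=
    letI := S.distribMulActionOfStable hS
    hlt S ((S.card_le_card_addGroup).lt_of_ne (mt S.card_eq_iff_eq_top.mp hS_top))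
      fun s hs => Subtype.ext (hA s fun g => congrArg Subtype.val (hs g))
  have hK : ∀ (g : G), ∀ a ∈ φ.ker, g • a ∈ φ.ker := fun g a ha => by
    rw [AddMonoidHom.mem_ker] at ha ⊢
    rw [hφ, ha, smul_zero]
  have hR : ∀ (g : G), ∀ a ∈ φ.range, g • a ∈ φ.range := by
    rintro g _ ⟨a, rfl⟩
    exact ⟨g • a, hφ g a⟩
  let := φ.ker.distribMulActionOfStable hK
  let := φ.range.distribMulActionOfStable hR
  let ι : φ.ker →+[G] A := { φ.ker.subtype with map_smul' := fun _ _ => rfl }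
  let π : A →+[G] φ.range := { φ.rangeRestrict with map_smul' := fun g a => Subtype.ext (hφ g a) }
  refine H1Vanishes.of_exact ι π Subtype.val_injective φ.rangeRestrict_surjective (fun a => ?_)
    (hsub _ hK ?_) (hsub _ hR ?_)
  · change φ.rangeRestrict a = 0 ↔ a ∈ Set.range ((↑) : φ.ker → A)
    rw [Subtype.range_coe, ← AddMonoidHom.mem_ker, AddMonoidHom.ker_rangeRestrict]
    rfl
  · exact fun h => hφ₀ <| AddMonoidHom.ext fun a => φ.mem_ker.mp (h ▸ AddSubgroup.mem_top a)
  · exact fun h => hinj <| Finite.injective_iff_surjective.mpr (AddMonoidHom.range_eq_top.mp h)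

theorem h1Vanishes_of_h1Vanishes_quotient_center {G : Type u} [Group G]
    (hQ : ∀ (A : Type v) [AddCommGroup A] [Finite A] [DistribMulAction (G ⧸ center G) A],
      (∀ a : A, (∀ q : G ⧸ center G, q • a = a) → a = 0) → H1Vanishes (G ⧸ center G) A)
    (A : Type v) [AddCommGroup A] [Finite A] [DistribMulAction G A]
    (hA : ∀ a : A, (∀ g : G, g • a = a) → a = 0) : H1Vanishes G A := by
  induction hn : Nat.card A using Nat.strong_induction_on generalizing A with
  | _ n ih =>
  subst hn
  by_cases hZ : ∀ z ∈ center G, ∀ a : A, z • a = a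
  · let := DistribMulAction.compHom A <| QuotientGroup.lift (center G)
      (DistribMulAction.toAddMonoidEnd G A) fun z hz => AddMonoidHom.ext (hZ z hz)
    intro f hf
    refine hf.isCoboundary₁_of_surjective (QuotientGroup.mk' _) (QuotientGroup.mk'_surjective _)
      (fun _ _ => rfl) (fun z hz => ?_) (hQ A fun a ha => hA a fun g => ha g)
    have hz : z ∈ center G := (QuotientGroup.eq_one_iff z).mp hz
    exact hf.apply_eq_zero_of_smul_eq_self hA (mem_center_iff.mp hz) (hZ z hz)
  push Not at hZ
  obtain ⟨z, hz, a, ha⟩ := hZ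
  let φ : A →+ A := AddMonoidHom.mk' (fun a => z • a - a) fun a b => by rw [smul_add]; abel
  by_cases hinj : Injective φ
  · exact fun f hf => hf.isCoboundary₁_of_bijective (mem_center_iff.mp hz)
      (Finite.injective_iff_bijective.mp hinj)
  refine h1Vanishes_of_forall_card_lt hA (fun B _ _ _ hB hB₀ => ih _ hB B hB₀ rfl) φ (fun g b => ?_)
    (fun h => ha (sub_eq_zero.mp (DFunLike.congr_fun h a))) hinj
  simp only [φ, AddMonoidHom.mk'_apply, smul_sub, smul_smul, mem_center_iff.mp hz g]

theorem h1Vanishes_of_isNilpotent (G : Type u) [Group G] [Group.IsNilpotent G]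
    (A : Type v) [AddCommGroup A] [Finite A] [DistribMulAction G A]
    (hA : ∀ a : A, (∀ g : G, g • a = a) → a = 0) : H1Vanishes G A := by
  refine Group.nilpotent_center_quotient_ind (P := fun G _ _ => ∀ (A : Type v) [AddCommGroup A]
    [Finite A] [DistribMulAction G A], (∀ a : A, (∀ g : G, g • a = a) → a = 0) → H1Vanishes G A)
    G (fun G _ _ A _ _ _ hA f _ => ?_) (fun G _ _ hQ => h1Vanishes_of_h1Vanishes_quotient_center hQ)
    A hA
  have hfix (a : A) (g : G) : g • a = a := by rw [Subsingleton.elim g 1, one_smul]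
  exact ⟨0, fun g => by rw [hA (f g) (hfix _), smul_zero, sub_zero]⟩

end groupCohomology

theorem h1_vanishes_finite_nilpotent_general {G A : Type*} [Group G]
    (hnil : Group.IsNilpotent G)
    [AddCommGroup A] [Finite A] [DistribMulAction G A]
    (hAG : ∀ a : A, (∀ g : G, g • a = a) → a = 0)
    (f : G → A) (hf : ∀ x y : G, f (x * y) = x • f y + f x) :
    ∃ a : A, ∀ x : G, f x = x • a - a := by
  obtain ⟨a, ha⟩ := groupCohomology.h1Vanishes_of_isNilpotent G A hAG f hf
  exact ⟨a, fun x => (ha x).symm⟩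

/-- For a finite nilpotent group `G` and a finite `G`-module `A` with `A^G = 0`,
`H¹(G,A) = 0`: every derivation is inner. -/
theorem h1_vanishes_finite_nilpotent {G A : Type*} [Group G] [Finite G]
    (hnil : Group.IsNilpotent G)
    [AddCommGroup A] [Finite A] [DistribMulAction G A]
    (hAG : ∀ a : A, (∀ g : G, g • a = a) → a = 0)
    (f : G → A) (hf : ∀ x y : G, f (x * y) = x • f y + f x) :
    ∃ a : A, ∀ x : G, f x = x • a - a :=
  h1_vanishes_finite_nilpotent_general hnil hAG f hf
end

section
/- Let G be a finite nilpotent group and A a finite G-module with A^G = 0. Then for all G-submodules V ≤ U of A, the quotient module U/V satisfies (U/V)^G = 0. -/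
/-!
Bézout on the order of `u` reduces to the case `p ^ k • u = 0`. A finite nilpotent group has a
normal `p`-complement `Q`, the kernel of its projection onto the Sylow `p`-subgroup `P`. Averaging
over `Q`, whose order is prime to `p`, gives `|Q| • u ∈ V`, hence `u ∈ V`, as soon as the
`Q`-fixed `p ^ k`-torsion of `A` vanishes. That torsion is an abelian `p`-group stable under `P`,
and its `P`-fixed points are fixed by `Q ⊔ P = G`, hence zero; but a `p`-group acting on a
nontrivial `p`-group has a nontrivial fixed point.
-/

theorem Sylow.exists_surjective_monoidHom_of_isNilpotent {G : Type*} [Group G] [Finite G]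
    [Group.IsNilpotent G] {p : ℕ} [Fact p.Prime] (P : Sylow p G) :
    ∃ φ : G →* P, Function.Surjective φ := by
  by_cases hp : p ∣ Nat.card G
  · -- `e` identifies `G` with the product of its Sylow subgroups; project onto the factor `P`.
    obtain ⟨e⟩ := (Group.isNilpotent_of_finite_tfae (G := G)).out 0 4 |>.mp ‹_›
    have hp' : p ∈ (Nat.card G).primeFactors :=
      Nat.mem_primeFactors.mpr ⟨Fact.out, hp, Nat.card_pos.ne'⟩
    refine ⟨(Pi.evalMonoidHom _ P).comp ((Pi.evalMonoidHom _ ⟨p, hp'⟩).comp e.symm.toMonoidHom),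
      (Function.surjective_eval P).comp ((Function.surjective_eval _).comp e.symm.surjective)⟩
  · have : Subsingleton P := by
      rw [← Finite.card_le_one_iff_subsingleton, P.card_eq_multiplicity,
        Nat.factorization_eq_zero_of_not_dvd hp, pow_zero]
    exact ⟨1, fun _ => ⟨1, Subsingleton.elim _ _⟩⟩

theorem Sylow.exists_normal_isComplement'_of_isNilpotent {G : Type*} [Group G] [Finite G]
    [Group.IsNilpotent G] {p : ℕ} [Fact p.Prime] (P : Sylow p G) :
    ∃ Q : Subgroup G, Q.Normal ∧ Q.IsComplement' P := by
  obtain ⟨φ, hφ⟩ := P.exists_surjective_monoidHom_of_isNilpotent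
  have hcard : Nat.card φ.ker * Nat.card P = Nat.card G := by
    rw [mul_comm, Subgroup.card_eq_card_quotient_mul_card_subgroup φ.ker,
      Nat.card_congr (QuotientGroup.quotientKerEquivOfSurjective φ hφ).toEquiv]
  have hindex : Nat.card φ.ker = (P : Subgroup G).index :=
    Nat.eq_of_mul_eq_mul_right Nat.card_pos (hcard.trans (Subgroup.index_mul_card _).symm)
  refine ⟨φ.ker, φ.normal_ker, Subgroup.isComplement'_of_coprime hcard ?_⟩
  rw [hindex]
  exact P.card_coprime_index.symm

theorem IsPGroup.subsingleton_of_fixedPoints_eq_zero {P M : Type*} [Group P] {p : ℕ}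
    [Fact p.Prime] (hP : IsPGroup p P) [AddCommGroup M] [Finite M] [DistribMulAction P M] {k : ℕ}
    (htors : ∀ x : M, p ^ k • x = 0) (hfix : ∀ x : M, (∀ g : P, g • x = x) → x = 0) :
    Subsingleton M := by
  by_contra hM
  rw [not_subsingleton_iff_nontrivial] at hM
  have hMp : IsPGroup p (Multiplicative M) := fun x => ⟨k, htors x.toAdd⟩
  obtain ⟨n, hn, hcard⟩ := hMp.nontrivial_iff_card.mp hM
  have hdvd : p ∣ Nat.card M := hcard ▸ dvd_pow_self p hn.ne'
  obtain ⟨b, hb, hb0⟩ := hP.exists_fixed_point_of_prime_dvd_card_of_fixed_point M hdvd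
    (a := 0) (fun g => smul_zero g)
  exact hb0 (hfix b hb).symm

section

variable {G A : Type*} [Group G] [AddCommGroup A] [DistribMulAction G A]

theorem AddSubgroup.mem_of_nsmul_mem_of_coprime (V : AddSubgroup A) {m n : ℕ}
    (hmn : m.Coprime n) {u : A} (hu : n • u = 0) (hmu : m • u ∈ V) : u ∈ V := by
  obtain ⟨x, y, hxy⟩ := Nat.isCoprime_iff_coprime.mpr hmn
  have : u = x • (m • u) + y • (n • u) := by
    rw [← natCast_zsmul, ← natCast_zsmul, smul_smul, smul_smul, ← add_smul, hxy, one_smul]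
  rw [this, hu, smul_zero, add_zero]
  exact V.zsmul_mem hmu x

theorem sum_smul_mem_fixedPoints [Fintype G] (u : A) :
    ∑ h : G, h • u ∈ MulAction.fixedPoints G A := fun g => by
  rw [Finset.smul_sum]
  exact Fintype.sum_equiv (Equiv.mulLeft g) _ _ fun h => (mul_smul g h u).symm

theorem mem_of_smul_sub_mem_of_coprime_card [Finite G] (V : AddSubgroup A) {n : ℕ}
    (hn : (Nat.card G).Coprime n)
    (hfix : ∀ a : A, n • a = 0 → (∀ g : G, g • a = a) → a = 0)
    {u : A} (hu : n • u = 0) (hd : ∀ g : G, g • u - u ∈ V) : u ∈ V := by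
  have := Fintype.ofFinite G
  have hsum : ∑ h : G, h • u = 0 :=
    hfix _ (by simp_rw [Finset.smul_sum, smul_comm n _ u, hu, smul_zero, Finset.sum_const_zero])
      (sum_smul_mem_fixedPoints u)
  have hsum_sub : ∑ h : G, (h • u - u) = -(Nat.card G • u) := by
    rw [Finset.sum_sub_distrib, hsum, Finset.sum_const, Finset.card_univ,
      ← Nat.card_eq_fintype_card, zero_sub]
  refine V.mem_of_nsmul_mem_of_coprime hn hu ?_
  rw [← neg_mem_iff, ← hsum_sub]
  exact V.sum_mem fun h _ => hd h

theorem eq_zero_of_pow_nsmul_eq_zero_of_fixed_by_normal [Finite A]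
    (hAG : ∀ a : A, (∀ g : G, g • a = a) → a = 0) {p k : ℕ} [Fact p.Prime]
    {P Q : Subgroup G} (hP : IsPGroup p P) (hQ : Q.Normal) (hQP : Q ⊔ P = ⊤)
    {a : A} (ha : p ^ k • a = 0) (hQa : ∀ q ∈ Q, q • a = a) : a = 0 := by
  let M : AddSubgroup A :=
    { carrier := {x | p ^ k • x = 0 ∧ ∀ q ∈ Q, q • x = x}
      zero_mem' := ⟨smul_zero _, fun q _ => smul_zero q⟩
      add_mem' := fun hx hy => ⟨by rw [smul_add, hx.1, hy.1, add_zero],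
        fun q hq => by rw [smul_add, hx.2 q hq, hy.2 q hq]⟩
      neg_mem' := fun hx => ⟨by rw [smul_neg, hx.1, neg_zero],
        fun q hq => by rw [smul_neg, hx.2 q hq]⟩ }
  have hMG (g : G) {x : A} (hx : x ∈ M) : g • x ∈ M := by
    refine ⟨by rw [smul_comm, hx.1, smul_zero], fun q hq => ?_⟩
    have hq' : g⁻¹ * q * g ∈ Q := by simpa using hQ.conj_mem q hq g⁻¹
    calc q • g • x = g • (g⁻¹ * q * g) • x := by simp only [smul_smul]; group
      _ = g • x := by rw [hx.2 _ hq']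
  let _ : SMul P M := ⟨fun g x => ⟨(g : G) • (x : A), hMG g x.2⟩⟩
  let _ : DistribMulAction P M :=
    Function.Injective.distribMulAction M.subtype Subtype.val_injective fun _ _ => rfl
  have hfix (x : M) (hx : ∀ g : P, g • x = x) : x = 0 := by
    suffices ⊤ ≤ MulAction.stabilizer G (x : A) from
      Subtype.ext (hAG x fun g => this (Subgroup.mem_top g))
    rw [← hQP]
    exact sup_le (fun q hq => x.2.2 q hq) fun g hg => congrArg Subtype.val (hx ⟨g, hg⟩)
  have := hP.subsingleton_of_fixedPoints_eq_zero (fun x : M => Subtype.ext x.2.1) hfix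
  exact congrArg Subtype.val (Subsingleton.elim (⟨a, ha, hQa⟩ : M) 0)

theorem mem_of_smul_sub_mem_of_pow_nsmul_eq_zero [Finite G] [Group.IsNilpotent G] [Finite A]
    (hAG : ∀ a : A, (∀ g : G, g • a = a) → a = 0) (V : AddSubgroup A) {p k : ℕ} [Fact p.Prime]
    {u : A} (hu : p ^ k • u = 0) (hd : ∀ g : G, g • u - u ∈ V) : u ∈ V := by
  obtain ⟨P⟩ : Nonempty (Sylow p G) := inferInstance
  obtain ⟨Q, hQ, hQP⟩ := P.exists_normal_isComplement'_of_isNilpotent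
  have hQp : ¬ p ∣ Nat.card Q := hQP.index_eq_card ▸ P.not_dvd_index
  exact mem_of_smul_sub_mem_of_coprime_card (G := Q) V
    (((Nat.Prime.coprime_iff_not_dvd Fact.out).mpr hQp).symm.pow_right k)
    (fun a ha hQa => eq_zero_of_pow_nsmul_eq_zero_of_fixed_by_normal hAG P.isPGroup' hQ
      hQP.sup_eq_top ha fun q hq => hQa ⟨q, hq⟩) hu fun q => hd q

theorem mem_of_smul_sub_mem_of_coprime_mul (V : AddSubgroup A) {m n : ℕ} (hmn : m.Coprime n)
    (hm : ∀ u : A, m • u = 0 → (∀ g : G, g • u - u ∈ V) → u ∈ V)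
    (hn : ∀ u : A, n • u = 0 → (∀ g : G, g • u - u ∈ V) → u ∈ V)
    {u : A} (hu : (m * n) • u = 0) (hd : ∀ g : G, g • u - u ∈ V) : u ∈ V := by
  obtain ⟨x, y, hxy⟩ := Nat.isCoprime_iff_coprime.mpr hmn
  have hdc (c : ℤ) (g : G) : g • (c • u) - c • u ∈ V := by
    rw [smul_comm, ← smul_sub]
    exact V.zsmul_mem (hd g) c
  have hsplit : u = (x * m) • u + (y * n) • u := by rw [← add_smul, hxy, one_smul]
  rw [hsplit]
  refine V.add_mem (hn _ ?_ (hdc _)) (hm _ ?_ (hdc _))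
  · rw [← natCast_zsmul, smul_smul, show (n : ℤ) * (x * m) = x * (m * n : ℕ) by push_cast; ring,
      mul_smul, natCast_zsmul, hu, smul_zero]
  · rw [← natCast_zsmul, smul_smul, show (m : ℤ) * (y * n) = y * (m * n : ℕ) by push_cast; ring,
      mul_smul, natCast_zsmul, hu, smul_zero]

theorem mem_of_smul_sub_mem [Finite G] [Group.IsNilpotent G] [Finite A]
    (hAG : ∀ a : A, (∀ g : G, g • a = a) → a = 0) (V : AddSubgroup A) {u : A}
    (hd : ∀ g : G, g • u - u ∈ V) : u ∈ V := by
  suffices ∀ n : ℕ, n ≠ 0 → ∀ u : A, n • u = 0 → (∀ g : G, g • u - u ∈ V) → u ∈ V from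
    this (Nat.card A) Nat.card_pos.ne' u card_nsmul_eq_zero' hd
  intro n
  induction n using Nat.recOnPrimeCoprime with
  | zero => exact fun h => (h rfl).elim
  | prime_pow p k hp =>
    have := Fact.mk hp
    exact fun _ _ => mem_of_smul_sub_mem_of_pow_nsmul_eq_zero hAG V
  | coprime m n hm hn hmn ihm ihn =>
    exact fun _ _ => mem_of_smul_sub_mem_of_coprime_mul V hmn (ihm (by omega)) (ihn (by omega))

end

theorem section_fixed_points_trivial_general {G A : Type*} [Group G] [Finite G]
    (hnil : Group.IsNilpotent G)
    [AddCommGroup A] [Finite A] [DistribMulAction G A]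
    (hAG : ∀ a : A, (∀ g : G, g • a = a) → a = 0)
    (U V : AddSubgroup A) :
    ∀ u ∈ U, (∀ g : G, g • u - u ∈ V) → u ∈ V := by
  have := hnil
  exact fun _ _ => mem_of_smul_sub_mem hAG V

/-- For a finite nilpotent group `G` and a finite `G`-module `A` with `A^G = 0`, every
section `U/V` between `G`-submodules `V ≤ U` of `A` has trivial `G`-fixed points:
if `u ∈ U` and `g • u - u ∈ V` for all `g`, then `u ∈ V`. -/
theorem section_fixed_points_trivial {G A : Type*} [Group G] [Finite G]
    (hnil : Group.IsNilpotent G)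
    [AddCommGroup A] [Finite A] [DistribMulAction G A]
    (hAG : ∀ a : A, (∀ g : G, g • a = a) → a = 0)
    (U V : AddSubgroup A) (hVU : V ≤ U)
    (hUinv : ∀ g : G, ∀ a ∈ U, g • a ∈ U)
    (hVinv : ∀ g : G, ∀ a ∈ V, g • a ∈ V) :
    ∀ u ∈ U, (∀ g : G, g • u - u ∈ V) → u ∈ V :=
  section_fixed_points_trivial_general hnil hAG U V
end

section
/- Let V be a finite-dimensional vector space over a perfect field of characteristic p > 0 and x ∈ End(V). Then x is a semisimple endomorphism (its minimal polynomial is squarefree) if and only if x lies in the linear span of {x^{p^i} : i ≥ 1}. -/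
open Module.End Polynomial

private lemma ssim_aux_commute {K V : Type*} [Field K]
    [AddCommGroup V] [Module K V] (x : Module.End K V) :
    ∀ a ∈ Algebra.adjoin K {x}, ∀ b ∈ Algebra.adjoin K {x}, Commute a b := by
  intro a ha b hb
  rw [Algebra.adjoin_singleton_eq_range_aeval] at ha hb
  obtain ⟨f, rfl⟩ := ha; obtain ⟨g, rfl⟩ := hb
  exact (Commute.all f g).map (Polynomial.aeval x)

/-- Freshman's dream for finite sums of pairwise commuting elements. -/
private lemma ssim_aux_sum_pow {R : Type*} [Ring R] {p : ℕ} [Fact p.Prime] [CharP R p]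
    {ι : Type*} (s : Finset ι) (f : ι → R)
    (hcomm : ∀ i ∈ s, ∀ j ∈ s, Commute (f i) (f j)) :
    (∑ i ∈ s, f i) ^ p = ∑ i ∈ s, f i ^ p := by
  induction s using Finset.cons_induction with
  | empty => simp [zero_pow (Fact.out : p.Prime).ne_zero]
  | cons a s ha ih =>
    rw [Finset.sum_cons, Finset.sum_cons,
      add_pow_char_of_commute p (Commute.sum_right _ _ _ fun j hj =>
        hcomm a (Finset.mem_cons_self a s) j (Finset.mem_cons_of_mem hj)),
      ih fun i hi j hj =>
        hcomm i (Finset.mem_cons_of_mem hi) j (Finset.mem_cons_of_mem hj)]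

/-- Over a perfect field of characteristic `p > 0`, an endomorphism `x` of a
finite-dimensional vector space `V` is semisimple (its minimal polynomial is squarefree)
iff `x` lies in the linear span of `{x ^ p ^ i : i ≥ 1}`. -/
theorem semisimple_iff_mem_span_p_powers {K V : Type*} [Field K] [PerfectField K]
    {p : ℕ} [Fact p.Prime] [CharP K p]
    [AddCommGroup V] [Module K V] [FiniteDimensional K V] (x : Module.End K V) :
    Squarefree (minpoly K x) ↔
      x ∈ Submodule.span K (Set.range fun i : ℕ => x ^ p ^ (i + 1)) := by
  have hp2 : 2 ≤ p := (Fact.out : p.Prime).two_le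
  rcases subsingleton_or_nontrivial V with hV | hV
  · -- trivial case
    have hx0 : x = 0 := Subsingleton.elim _ _
    constructor
    · intro _
      rw [hx0]; exact Submodule.zero_mem _
    · intro _
      have h1 : minpoly K x = 1 := by
        have hdvd : (minpoly K x) ∣ 1 := minpoly.dvd K x (Subsingleton.elim _ _)
        exact eq_one_of_monic_natDegree_zero
          (minpoly.monic (Algebra.IsIntegral.isIntegral x))
          (by simpa using natDegree_le_of_dvd hdvd one_ne_zero)
      rw [h1]; exact squarefree_one
  letI : CharP (Module.End K V) p :=
    charP_of_injective_algebraMap (algebraMap K (Module.End K V)).injective p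
  have hAD := ssim_aux_commute (K := K) x
  constructor
  · -- semisimple → in span
    intro hss
    have hsemi : x.IsSemisimple :=
      isSemisimple_of_squarefree_aeval_eq_zero hss (minpoly.aeval K x)
    have hred : ∀ a ∈ Algebra.adjoin K {x}, a ^ p = 0 → a = 0 := fun a ha hap =>
      Module.End.eq_zero_of_isNilpotent_isSemisimple ⟨p, hap⟩
        (IsSemisimple.of_mem_adjoin_singleton hsemi ha)
    set W : ℕ → Submodule K (Module.End K V) :=
      fun k => Submodule.span K (Set.range fun i : ℕ => x ^ p ^ (i + k)) with hW
    have hWle : ∀ k, W (k + 1) ≤ W k := by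
      intro k
      rw [hW]
      refine Submodule.span_le.2 (Set.range_subset_iff.2 fun i => ?_)
      refine Submodule.subset_span ⟨i + 1, ?_⟩
      show x ^ p ^ (i + 1 + k) = x ^ p ^ (i + (k + 1))
      rw [show i + 1 + k = i + (k + 1) from by omega]
    have hmem : ∀ k, x ^ p ^ k ∈ W k := by
      intro k
      refine Submodule.subset_span ⟨0, ?_⟩
      show x ^ p ^ (0 + k) = x ^ p ^ k
      rw [Nat.zero_add]
    -- Frobenius descent step
    have step : ∀ k, x ^ p ^ (k + 1) ∈ W (k + 2) → x ^ p ^ k ∈ W (k + 1) := by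
      intro k h
      rw [hW, Finsupp.mem_span_range_iff_exists_finsupp] at h ⊢
      obtain ⟨c, hc⟩ := h
      set σ := (frobeniusEquiv K p).symm with hσ
      refine ⟨c.mapRange (fun a => σ a) (by simp [hσ]), ?_⟩
      rw [Finsupp.sum_mapRange_index (by simp)]
      set a : Module.End K V :=
        x ^ p ^ k - c.sum (fun i ci => σ ci • x ^ p ^ (i + (k + 1))) with ha
      have hcomm1 : Commute (x ^ p ^ k)
          (c.sum (fun i ci => σ ci • x ^ p ^ (i + (k + 1)))) := by
        rw [Finsupp.sum]
        exact Commute.sum_right _ _ _ fun i _ =>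
          ((Commute.pow_pow_self x _ _)).smul_right _
      have key : a ^ p
          = x ^ p ^ (k + 1) - c.sum (fun i ci => ci • x ^ p ^ (i + (k + 2))) := by
        rw [ha, sub_pow_char_of_commute p hcomm1, Finsupp.sum, Finsupp.sum,
          ssim_aux_sum_pow _ _ fun i _ j _ =>
            ((Commute.pow_pow_self x _ _).smul_left _).smul_right _]
        congr 1
        · rw [← pow_mul, ← pow_succ]
        · refine Finset.sum_congr rfl fun i _ => ?_
          rw [_root_.smul_pow, ← pow_mul, ← pow_succ,
            show σ (c i) ^ p = c i from by
              rw [hσ, ← frobenius_def, ← frobeniusEquiv_apply, RingEquiv.apply_symm_apply],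
            show i + (k + 1) + 1 = i + (k + 2) from by omega]
      have hamem : a ∈ Algebra.adjoin K {x} := by
        rw [ha]
        refine sub_mem (pow_mem (Algebra.self_mem_adjoin_singleton K x) _) ?_
        rw [Finsupp.sum]
        exact Subalgebra.sum_mem _ fun i _ =>
          Subalgebra.smul_mem _ (pow_mem (Algebra.self_mem_adjoin_singleton K x) _) _
      have ha0 : a = 0 := hred a hamem (by rw [key, hc, sub_self])
      rw [ha, sub_eq_zero] at ha0
      exact ha0.symm
    -- descent to k = 0
    have desc : ∀ k, x ^ p ^ k ∈ W (k + 1) → x ∈ W 1 := by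
      intro k
      induction k with
      | zero => intro h; simpa using h
      | succ k ih => intro h; exact ih (step k h)
    -- stabilization
    have stab : ∃ k, W k ≤ W (k + 1) := by
      by_contra hcon
      push_neg at hcon
      have hlt : ∀ k, Module.finrank K (W (k + 1)) < Module.finrank K (W k) := fun k =>
        Submodule.finrank_lt_finrank_of_lt ((hWle k).lt_of_ne fun e => hcon k e.ge)
      have hub : ∀ k, Module.finrank K (W k) + k ≤ Module.finrank K (W 0) := by
        intro k
        induction k with
        | zero => simp
        | succ k ih => have := hlt k; omega
      exact absurd (hub (Module.finrank K (W 0) + 1)) (by omega)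
    obtain ⟨k, hk⟩ := stab
    exact desc k (hk (hmem k))
  · -- in span → semisimple
    intro hx
    rw [Finsupp.mem_span_range_iff_exists_finsupp] at hx
    obtain ⟨c, hc⟩ := hx
    obtain ⟨n, hn_mem, s, hs_mem, hn, hs, hx_eq⟩ :=
      Module.End.exists_isNilpotent_isSemisimple (f := x)
    have hns : Commute n s := hAD n hn_mem s hs_mem
    have hpow : ∀ i : ℕ, x ^ p ^ (i + 1) = n ^ p ^ (i + 1) + s ^ p ^ (i + 1) := fun i => by
      rw [hx_eq]; exact add_pow_char_pow_of_commute p (i + 1) hns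
    set N := c.sum (fun i ci => ci • n ^ p ^ (i + 1)) with hN
    set S := c.sum (fun i ci => ci • s ^ p ^ (i + 1)) with hS
    have hsum : N + S = x := by
      rw [hN, hS, ← Finsupp.sum_add, ← hc]
      exact Finsupp.sum_congr fun i _ => by rw [hpow i, smul_add]
    have hS_mem : S ∈ Algebra.adjoin K {s} := by
      rw [hS, Finsupp.sum]
      exact Subalgebra.sum_mem _ fun i _ =>
        Subalgebra.smul_mem _ (pow_mem (Algebra.self_mem_adjoin_singleton K s) _) _
    have hnpow : ∀ e : ℕ, 1 ≤ e → IsNilpotent (n ^ e) := by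
      intro e he
      obtain ⟨m, hm⟩ := hn
      exact ⟨m, by rw [← pow_mul, mul_comm, pow_mul, hm, zero_pow (by omega)]⟩
    have hN_nil : IsNilpotent N := by
      rw [hN, Finsupp.sum]
      refine Commute.isNilpotent_sum (fun i _ => ?_) (fun i j _ _ => ?_)
      · exact (hnpow _ (Nat.one_le_pow _ _ (by omega))).smul _
      · exact (((Commute.pow_pow_self n _ _)).smul_left _).smul_right _
    have hnN : Commute n N := by
      rw [hN, Finsupp.sum]
      exact Commute.sum_right _ _ _ fun i _ => ((Commute.refl n).pow_right _).smul_right _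
    have hnN_nil : IsNilpotent (n - N) := hnN.isNilpotent_sub hn hN_nil
    have heq : n - N = S - s := by
      have h1 : n + s = S + N := by rw [add_comm S N, hsum, hx_eq]
      rw [sub_eq_sub_iff_add_eq_add]
      exact h1
    have hSs_ss : (S - s).IsSemisimple :=
      IsSemisimple.of_mem_adjoin_singleton hs
        (sub_mem hS_mem (Algebra.self_mem_adjoin_singleton K s))
    have hnN0 : n - N = 0 :=
      Module.End.eq_zero_of_isNilpotent_isSemisimple hnN_nil (heq ▸ hSs_ss)
    have hnNeq : n = N := by rwa [sub_eq_zero] at hnN0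
    -- now show n = 0
    set y := c.sum (fun i ci => ci • n ^ (p ^ (i + 1) - 1)) with hy
    have hny : n * y = N := by
      rw [hy, hN, Finsupp.mul_sum]
      refine Finsupp.sum_congr fun i _ => ?_
      rw [mul_smul_comm, ← pow_succ']
      congr 2
      have h1 : 1 ≤ p ^ (i + 1) := Nat.one_le_pow _ _ (by omega)
      omega
    have hy_nil : IsNilpotent y := by
      rw [hy, Finsupp.sum]
      refine Commute.isNilpotent_sum (fun i _ => ?_) (fun i j _ _ => ?_)
      · refine (hnpow _ ?_).smul _
        have h1 : p ≤ p ^ (i + 1) := Nat.le_self_pow (by omega) p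
        omega
      · exact (((Commute.pow_pow_self n _ _)).smul_left _).smul_right _
    have hn0 : n = 0 := by
      obtain ⟨u, hu⟩ := hy_nil.isUnit_one_sub
      have h1 : n * (1 - y) = 0 := by
        rw [mul_sub, mul_one, hny, ← hnNeq, sub_self]
      calc n = n * (↑u * ↑u⁻¹) := by rw [Units.mul_inv, mul_one]
        _ = (n * ↑u) * ↑u⁻¹ := by rw [mul_assoc]
        _ = 0 := by rw [hu, h1, zero_mul]
    have hxs : x = s := by rw [hx_eq, hn0, zero_add]
    rw [hxs]
    exact hs.minpoly_squarefree
end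

section
/- Let R be a commutative ring acting on an abelian group V, let W be an R-submodule such that both W and V/W are simple R-modules, and suppose ann_R(W) ≠ ann_R(V/W). If r ∈ ann_R(V/W) \ ann_R(W), then im(r) = W and V = W ⊕ ker(r). -/
/-- Let `R` be a commutative ring, `V` an `R`-module and `W` a submodule such that both `W`
and `V/W` are simple.  If `r ∈ ann_R(V/W) \ ann_R(W)` (i.e. `r • V ⊆ W` but `r` does not
kill `W`), then the image of multiplication by `r` equals `W` and `V = W ⊕ ker r`. -/
theorem simple_quotient_complement {R V : Type*} [CommRing R] [AddCommGroup V] [Module R V]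
    (W : Submodule R V) [IsSimpleModule R W] [IsSimpleModule R (V ⧸ W)]
    (r : R) (hrV : ∀ v : V, r • v ∈ W) (hrW : ¬ ∀ w ∈ W, r • w = 0) :
    LinearMap.range (LinearMap.lsmul R V r) = W ∧
      IsCompl W (LinearMap.ker (LinearMap.lsmul R V r)) := by
  -- The induced endomorphism of W
  set g : W →ₗ[R] W :=
    { toFun := fun w => ⟨r • (w : V), hrV w⟩
      map_add' := fun x y => Subtype.ext (by simpa using smul_add r (x:V) (y:V))
      map_smul' := fun c x => Subtype.ext (by simpa using smul_comm r c (x:V)) } with hg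
  have hgne : g ≠ 0 := by
    intro h
    apply hrW
    intro w hw
    exact congrArg Subtype.val (show g ⟨w, hw⟩ = 0 from by rw [h]; rfl)
  -- g is bijective since W is simple
  have hker : LinearMap.ker g = ⊥ := by
    rcases eq_bot_or_eq_top (LinearMap.ker g) with h | h
    · exact h
    · exact absurd (LinearMap.ker_eq_top.mp h) hgne
  have hrange : LinearMap.range g = ⊤ := by
    rcases eq_bot_or_eq_top (LinearMap.range g) with h | h
    · exact absurd (LinearMap.range_eq_bot.mp h) hgne
    · exact h
  have hsurj : Function.Surjective g := LinearMap.range_eq_top.mp hrange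
  have hrangeW : LinearMap.range (LinearMap.lsmul R V r) = W := by
    apply le_antisymm
    · rintro x ⟨v, rfl⟩
      exact hrV v
    · intro w hw
      obtain ⟨w', hw'⟩ := hsurj ⟨w, hw⟩
      exact ⟨(w' : V), congrArg Subtype.val hw'⟩
  refine ⟨hrangeW, ?_, ?_⟩
  · intro x hxW hxK
    intro y hy
    have h1 : x ≤ W ⊓ LinearMap.ker (LinearMap.lsmul R V r) := le_inf hxW hxK
    have hyx := h1 hy
    have : (⟨y, hyx.1⟩ : W) ∈ LinearMap.ker g := by
      have : r • y = 0 := hyx.2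
      ext
      simpa [hg] using this
    rw [hker] at this
    simpa using congrArg Subtype.val this
  · rw [codisjoint_iff_le_sup]
    intro v _
    obtain ⟨w, hw⟩ := hsurj ⟨r • v, hrV v⟩
    have hw' : r • (w : V) = r • v := congrArg Subtype.val hw
    have : v = (w : V) + (v - w) := by abel
    rw [this]
    exact Submodule.add_mem_sup w.2 (by simp [LinearMap.mem_ker, smul_sub, hw'])
end
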